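/- arXiv:1510.02378 — 6 statements merged into one kernel-verified Lean document; each statement's English description precedes it below -/
import Mathlib

section
/- Let n ≥ 0, r ≥ 2 and 0 ≤ s ≤ r−1 be integers, and for 1 ≤ j ≤ r−1 let η_j ≤ ζ_j be rational numbers with η_j < ζ_j whenever 1 ≤ j ≤ s. Then the maximum of b₀(τ) + s₀(τ) − 1 over all τ in the box T = ∏_{j=1}^{r−1}[η_j, ζ_j] satisfying i₀(τ) = 0 (i.e. τ_j ∉ ℤ for every 1 ≤ j ≤ s) is attained and equals s₁ − 1 − Σ_{j=1}^{r−1} ⌊η_j⌋, where s₁ = |{j : s+1 ≤ j ≤ r−1 and η_j ∈ ℤ}|. (This is equation (2) in the proof of Theorem 2.2: c_max = max{b₀(τ) + s₀(τ) − 1 : τ ∈ T, i₀(τ) = 0} = s₁ − 1 − Σ⌊η_j⌋.) -/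
/-!
Since `-⌊t⌋ + [t ∈ ℤ] = 1 - ⌈t⌉`, the quantity `b₀(τ) + s₀(τ)` is a sum of coordinatewise
antitone terms: `1 - ⌈τ_j⌉` for the free coordinates `j > s` and `-⌊τ_j⌋` for the constrained
ones. It is therefore bounded by its value at the corner `η`, which is
`s₁ - ∑ ⌊η_j⌋`. The bound is attained: keep `τ_j = η_j` for `j > s`, and for `j ≤ s` move
`τ_j` into `(η_j, ζ_j)` off the integers without changing its floor.
-/

open Finset

section FloorRing

variable {R : Type*} [Ring R] [LinearOrder R] [FloorRing R]

lemma neg_floor_add_ite_isInt_eq_one_sub_ceil [IsOrderedRing R] (a : R)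
    [Decidable (∃ k : ℤ, a = k)] :
    -⌊a⌋ + (if ∃ k : ℤ, a = k then 1 else 0) = 1 - ⌈a⌉ := by
  split_ifs with ha
  · obtain ⟨k, rfl⟩ := ha
    rw [Int.floor_intCast, Int.ceil_intCast]
    ring
  · have : ⌈a⌉ = ⌊a⌋ + 1 :=
      (Int.ceil_eq_floor_add_one_iff_notMem a).2 fun ⟨k, hk⟩ => ha ⟨k, hk.symm⟩
    omega

variable {ι : Type*} [Fintype ι] (P : ι → Prop) [DecidablePred P]

def floorCeilSum (τ : ι → R) : ℤ :=
  ∑ j, if P j then 1 - ⌈τ j⌉ else -⌊τ j⌋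

lemma neg_sum_floor_add_card_eq_floorCeilSum [IsOrderedRing R] (τ : ι → R) :
    -(∑ j, ⌊τ j⌋) + (Nat.card {j // P j ∧ ∃ k : ℤ, τ j = k} : ℤ) = floorCeilSum P τ := by
  classical
  rw [Nat.card_eq_fintype_card, Fintype.card_subtype, card_filter, Nat.cast_sum,
    ← sum_neg_distrib, ← sum_add_distrib, floorCeilSum]
  refine sum_congr rfl fun j _ => ?_
  by_cases hj : P j
  · simp only [hj, true_and, if_true]
    push_cast
    exact neg_floor_add_ite_isInt_eq_one_sub_ceil (τ j)
  · simp [hj]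

lemma antitone_floorCeilSum : Antitone (floorCeilSum (R := R) P) := fun σ τ hστ => by
  refine sum_le_sum fun j _ => ?_
  split_ifs
  · exact sub_le_sub_left (Int.ceil_mono (hστ j)) 1
  · exact neg_le_neg (Int.floor_mono (hστ j))

end FloorRing

lemma floorCeilSum_ratCast {K ι : Type*} [Field K] [LinearOrder K] [IsStrictOrderedRing K]
    [FloorRing K] [Fintype ι] (P : ι → Prop) [DecidablePred P] (η : ι → ℚ) :
    floorCeilSum P (fun j => (η j : K)) = floorCeilSum P η := by
  simp only [floorCeilSum, Rat.floor_cast, Rat.ceil_cast]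

lemma exists_mem_Ioo_floor_eq_of_lt {K : Type*} [Field K] [LinearOrder K] [IsStrictOrderedRing K]
    [FloorRing K] {a b : K} (hab : a < b) :
    ∃ t ∈ Set.Ioo a b, ⌊t⌋ = ⌊a⌋ ∧ ∀ n : ℤ, t ≠ n := by
  set m := min b (⌊a⌋ + 1)
  have ham : a < m := lt_min hab (Int.lt_floor_add_one a)
  have hfloor : ⌊(a + m) / 2⌋ = ⌊a⌋ := by
    rw [Int.floor_eq_iff]
    constructor <;> linarith [Int.floor_le a, min_le_right b ((⌊a⌋ : K) + 1)]
  refine ⟨(a + m) / 2, ⟨by linarith, by linarith [min_le_left b ((⌊a⌋ : K) + 1)]⟩, hfloor,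
    fun n hn => ?_⟩
  have : (⌊a⌋ : K) = (a + m) / 2 := by rw [← hfloor, hn, Int.floor_intCast]
  linarith [Int.floor_le a]

theorem stmt1_general (r s : ℕ)
    (η ζ : Fin (r - 1) → ℚ)
    (hle : ∀ j, η j ≤ ζ j)
    (hlt : ∀ j : Fin (r - 1), (j : ℕ) < s → η j < ζ j) :
    IsGreatest
      {b : ℤ | ∃ τ : Fin (r - 1) → ℝ,
        (∀ j, (η j : ℝ) ≤ τ j ∧ τ j ≤ (ζ j : ℝ)) ∧
        (∀ j : Fin (r - 1), (j : ℕ) < s → ∀ k : ℤ, τ j ≠ (k : ℝ)) ∧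
        b = -(∑ j, ⌊τ j⌋)
          + (Nat.card {j : Fin (r - 1) // s ≤ (j : ℕ) ∧ ∃ k : ℤ, τ j = (k : ℝ)} : ℤ) - 1}
      ((Nat.card {j : Fin (r - 1) // s ≤ (j : ℕ) ∧ ∃ k : ℤ, η j = (k : ℚ)} : ℤ)
        - 1 - ∑ j, ⌊η j⌋) := by
  set P : Fin (r - 1) → Prop := fun j => s ≤ (j : ℕ)
  choose t ht using fun (j : Fin (r - 1)) (hj : (j : ℕ) < s) =>
    exists_mem_Ioo_floor_eq_of_lt (show (η j : ℝ) < ζ j from mod_cast hlt j hj)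
  set τ : Fin (r - 1) → ℝ := fun j => if hj : (j : ℕ) < s then t j hj else η j
  have hτ : floorCeilSum P τ = floorCeilSum P (fun j => (η j : ℝ)) := by
    refine sum_congr rfl fun j _ => ?_
    by_cases hj : (j : ℕ) < s
    · simp only [P, τ, hj, dif_pos, (ht j hj).2.1, not_le.2 hj, if_false]
    · simp only [P, τ, hj, dif_neg, not_lt.1 hj, if_true, not_false_eq_true]
  have hvalue : (Nat.card {j : Fin (r - 1) // s ≤ (j : ℕ) ∧ ∃ k : ℤ, η j = (k : ℚ)} : ℤ)
      - 1 - ∑ j, ⌊η j⌋ = floorCeilSum P (fun j => (η j : ℝ)) - 1 := by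
    rw [floorCeilSum_ratCast, ← neg_sum_floor_add_card_eq_floorCeilSum]
    ring
  refine ⟨⟨τ, fun j => ?_, fun j hj => ?_, ?_⟩, ?_⟩
  · by_cases hj : (j : ℕ) < s
    · simpa only [τ, hj, dif_pos] using And.imp le_of_lt le_of_lt (ht j hj).1
    · simpa only [τ, hj, dif_neg, not_false_eq_true, le_refl, true_and] using
        (mod_cast hle j : (η j : ℝ) ≤ ζ j)
  · simpa only [τ, hj, dif_pos] using (ht j hj).2.2
  · rw [hvalue, neg_sum_floor_add_card_eq_floorCeilSum, hτ]
  · rintro _ ⟨σ, hσ, -, rfl⟩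
    rw [hvalue, neg_sum_floor_add_card_eq_floorCeilSum]
    exact sub_le_sub_right (antitone_floorCeilSum P fun j => (hσ j).1) 1

/-- Equation (2) in the proof of Theorem 2.2: the maximum of
`b₀(τ) + s₀(τ) - 1` over the box `∏ [η_j, ζ_j]` subject to `τ_j ∉ ℤ` for
`1 ≤ j ≤ s` is attained and equals `s₁ - 1 - ∑ ⌊η_j⌋`, where
`b₀(τ) = -(⌊τ₁⌋ + ⋯ + ⌊τ_{r-1}⌋)`, `s₀(τ) = |{j : s+1 ≤ j ≤ r-1, τ_j ∈ ℤ}|`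
and `s₁ = |{j : s+1 ≤ j ≤ r-1, η_j ∈ ℤ}|`.  (Indices `1 ≤ j ≤ r-1` are
realized as `j : Fin (r-1)`; the 1-indexed condition `j ≤ s` becomes
`(j : ℕ) < s` and `s+1 ≤ j` becomes `s ≤ (j : ℕ)`.) -/
theorem stmt1 (n r s : ℕ) (hr : 2 ≤ r) (hs : s ≤ r - 1)
    (η ζ : Fin (r - 1) → ℚ)
    (hle : ∀ j, η j ≤ ζ j)
    (hlt : ∀ j : Fin (r - 1), (j : ℕ) < s → η j < ζ j) :
    IsGreatest
      {b : ℤ | ∃ τ : Fin (r - 1) → ℝ,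
        (∀ j, (η j : ℝ) ≤ τ j ∧ τ j ≤ (ζ j : ℝ)) ∧
        (∀ j : Fin (r - 1), (j : ℕ) < s → ∀ k : ℤ, τ j ≠ (k : ℝ)) ∧
        b = -(∑ j, ⌊τ j⌋)
          + (Nat.card {j : Fin (r - 1) // s ≤ (j : ℕ) ∧ ∃ k : ℤ, τ j = (k : ℝ)} : ℤ) - 1}
      ((Nat.card {j : Fin (r - 1) // s ≤ (j : ℕ) ∧ ∃ k : ℤ, η j = (k : ℚ)} : ℤ)
        - 1 - ∑ j, ⌊η j⌋) :=
  stmt1_general r s η ζ hle hlt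
end

section
/- Let n ≥ 0, r ≥ 2 and 0 ≤ s ≤ r−1 be integers with n + r ≥ 3, and for 1 ≤ j ≤ r−1 let η_j ≤ ζ_j be rational numbers with η_j < ζ_j whenever 1 ≤ j ≤ s. For τ in the box T = ∏_{j=1}^{r−1}[η_j, ζ_j] with i₀(τ) = 0 set m₀(τ) = b₀(τ) − (n + r − 1) and m₁(τ) = b₀(τ) + s₀(τ) − 1. Then the union of the closed real intervals [m₀(τ), m₁(τ)] over all τ ∈ T with i₀(τ) = 0 equals the closed interval [c_min, c_max], where c_min = i₁ − Σ_{j=1}^{r−1}⌊ζ_j⌋ − (n + r − 1), c_max = s₁ − 1 − Σ_{j=1}^{r−1}⌊η_j⌋, i₁ = |{j ≤ s : ζ_j ∈ ℤ}| and s₁ = |{j > s : η_j ∈ ℤ}|. -/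
/-!
For admissible `τ` the integer `∑ ⌊τ j⌋` takes exactly the values between `∑ ⌊η j⌋` and
`∑ ⌊ζ j⌋ - i₁`: a coordinate `j ≤ s` must avoid the integers, so there `⌊τ j⌋ ≤ ⌈ζ j⌉ - 1`,
and every value in between is reached by a coordinatewise choice of floors. Since
`⌊x⌋ - [x ∈ ℤ] = ⌈x⌉ - 1`, the quantity `∑ ⌊τ j⌋ - s₀(τ)` is monotone in `τ`, so it is smallest
at the lower corner of the box. As `n + r - 1 ≥ 2`, the intervals `[-N - (n + r - 1), -N - 1]`
for consecutive `N` overlap and fill `[c_min, -∑ ⌊η j⌋ - 1]`; the lower corner extends this up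
to `c_max`.
-/

open Finset

theorem Finset.exists_sum_eq_of_le_of_le {ι : Type*} [DecidableEq ι] (s : Finset ι) {a b : ι → ℤ}
    (hab : ∀ j ∈ s, a j ≤ b j) {S : ℤ} (ha : ∑ j ∈ s, a j ≤ S) (hb : S ≤ ∑ j ∈ s, b j) :
    ∃ c : ι → ℤ, (∀ j ∈ s, a j ≤ c j ∧ c j ≤ b j) ∧ ∑ j ∈ s, c j = S := by
  induction s using Finset.induction_on generalizing S with
  | empty => exact ⟨a, by simp, by simp_all; omega⟩
  | insert i s hi ih =>
    rw [sum_insert hi] at ha hb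
    have hai := hab i (mem_insert_self i s)
    have hsab : ∑ j ∈ s, a j ≤ ∑ j ∈ s, b j :=
      sum_le_sum fun j hj => hab j (mem_insert_of_mem hj)
    set ci := max (a i) (min (b i) (S - ∑ j ∈ s, a j)) with hci
    obtain ⟨c, hc, hcS⟩ := ih (fun j hj => hab j (mem_insert_of_mem hj)) (S := S - ci)
      (by omega) (by omega)
    have hupdate : ∀ j ∈ s, Function.update c i ci j = c j :=
      fun j hj => Function.update_of_ne (ne_of_mem_of_not_mem hj hi) _ _
    refine ⟨Function.update c i ci, fun j hj => ?_, ?_⟩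
    · rcases mem_insert.mp hj with rfl | hj
      · rw [Function.update_self]; omega
      · rw [hupdate j hj]; exact hc j hj
    · rw [sum_insert hi, Function.update_self, sum_congr rfl hupdate, hcS]; ring

section Floor

variable {R : Type*} [Ring R] [LinearOrder R] [IsStrictOrderedRing R] [FloorRing R]

theorem Int.floor_sub_ite_eq_ceil_sub_one (x : R) [Decidable (∃ k : ℤ, x = k)] :
    ⌊x⌋ - (if ∃ k : ℤ, x = k then 1 else 0) = ⌈x⌉ - 1 := by
  split_ifs with hx
  · obtain ⟨k, rfl⟩ := hx
    simp
  · rw [(Int.ceil_eq_floor_add_one_iff_notMem x).mpr fun ⟨k, hk⟩ => hx ⟨k, hk.symm⟩]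
    ring

variable {ι : Type*} [Fintype ι]

theorem sum_floor_sub_card_eq (Q : ι → Prop) [DecidablePred Q] (x : ι → R) :
    ∑ j, ⌊x j⌋ - (Nat.card {j // Q j ∧ ∃ k : ℤ, x j = k} : ℤ) =
      ∑ j, if Q j then ⌈x j⌉ - 1 else ⌊x j⌋ := by
  classical
  rw [Nat.card_eq_fintype_card, Fintype.card_subtype, natCast_card_filter, ← sum_sub_distrib]
  refine sum_congr rfl fun j _ => ?_
  by_cases hQ : Q j
  · simp only [hQ, true_and, if_true, Int.floor_sub_ite_eq_ceil_sub_one]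
  · simp [hQ]

theorem sum_floor_sub_card_mono (Q : ι → Prop) :
    Monotone fun x : ι → R => ∑ j, ⌊x j⌋ - (Nat.card {j // Q j ∧ ∃ k : ℤ, x j = k} : ℤ) := by
  classical
  intro x y hxy
  simp only [sum_floor_sub_card_eq]
  refine sum_le_sum fun j _ => ?_
  split_ifs
  · have := Int.ceil_mono (hxy j); omega
  · exact Int.floor_mono (hxy j)

end Floor

section Realization

variable {K : Type*} [Field K] [LinearOrder K] [IsStrictOrderedRing K] [FloorRing K]

theorem exists_mem_Icc_floor_eq {u v : K} (huv : u ≤ v) {c : ℤ} (hu : ⌊u⌋ ≤ c)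
    (hv : c ≤ ⌊v⌋) : ∃ t ∈ Set.Icc u v, ⌊t⌋ = c := by
  have hu' : u < c + 1 := Int.floor_le_iff.mp hu
  refine ⟨max u c, ⟨le_max_left _ _, max_le huv (Int.le_floor.mp hv)⟩, ?_⟩
  rw [Int.floor_eq_iff]
  exact ⟨le_max_right _ _, max_lt hu' (lt_add_one _)⟩

theorem exists_mem_Icc_forall_ne_floor_eq {u v : K} (huv : u < v) {c : ℤ} (hu : ⌊u⌋ ≤ c)
    (hv : c < ⌈v⌉) : ∃ t ∈ Set.Icc u v, (∀ k : ℤ, t ≠ k) ∧ ⌊t⌋ = c := by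
  have hu' : u < c + 1 := Int.floor_le_iff.mp hu
  obtain ⟨t, hlo, hhi⟩ := exists_between
    (max_lt (lt_min huv hu') (lt_min (Int.lt_ceil.mp hv) (lt_add_one _)) :
      max u (c : K) < min v (c + 1))
  have hct : (c : K) < t := (le_max_right _ _).trans_lt hlo
  have htc : t < c + 1 := hhi.trans_le (min_le_right _ _)
  refine ⟨t, ⟨(le_max_left _ _).trans hlo.le, hhi.le.trans (min_le_left _ _)⟩, ?_,
    Int.floor_eq_iff.mpr ⟨hct.le, htc⟩⟩
  rintro k rfl
  have : c < k := by exact_mod_cast hct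
  have : k < c + 1 := by exact_mod_cast htc
  omega

end Realization

section Admissible

variable {K : Type*} [Field K] [LinearOrder K] [IsStrictOrderedRing K] [FloorRing K]
  {ι : Type*} {P : ι → Prop} {u v : ι → K}

-- `τ` lies in the box and has `i₀(τ) = 0`, the coordinates in `J` being those with `P j`.
def IsAdmissible (P : ι → Prop) (u v τ : ι → K) : Prop :=
  (∀ j, u j ≤ τ j ∧ τ j ≤ v j) ∧ ∀ j, P j → ∀ k : ℤ, τ j ≠ k

theorem exists_isAdmissible_floor_eq_floor (huv : ∀ j, u j ≤ v j)
    (hP : ∀ j, P j → u j < v j) :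
    ∃ τ, IsAdmissible P u v τ ∧ (∀ j, ⌊τ j⌋ = ⌊u j⌋) ∧ ∀ j, ¬P j → τ j = u j := by
  have : ∀ j, ∃ t, (u j ≤ t ∧ t ≤ v j) ∧ (P j → ∀ k : ℤ, t ≠ k) ∧ ⌊t⌋ = ⌊u j⌋ ∧
      (¬P j → t = u j) := by
    intro j
    by_cases hPj : P j
    · obtain ⟨t, ht, htk, htc⟩ := exists_mem_Icc_forall_ne_floor_eq (hP j hPj) le_rfl
        (Int.floor_lt_ceil_of_lt (hP j hPj))
      exact ⟨t, ht, fun _ => htk, htc, fun h => absurd hPj h⟩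
    · exact ⟨u j, ⟨le_rfl, huv j⟩, fun h => absurd h hPj, rfl, fun _ => rfl⟩
  choose τ hτ hτP hτu hτ_eq using this
  exact ⟨τ, ⟨hτ, hτP⟩, hτu, hτ_eq⟩

variable [Fintype ι]

theorem IsAdmissible.sum_floor_le {τ : ι → K} (hτ : IsAdmissible P u v τ) :
    ∑ j, ⌊τ j⌋ ≤ ∑ j, ⌊v j⌋ - Nat.card {j // P j ∧ ∃ k : ℤ, v j = k} := by
  classical
  rw [sum_floor_sub_card_eq]
  refine sum_le_sum fun j _ => ?_
  split_ifs with hPj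
  · have hτj := (Int.ceil_eq_floor_add_one_iff_notMem (τ j)).mpr
      fun ⟨k, hk⟩ => hτ.2 j hPj k hk.symm
    have := Int.ceil_mono (hτ.1 j).2
    omega
  · exact Int.floor_mono (hτ.1 j).2

theorem exists_isAdmissible_sum_floor_eq (huv : ∀ j, u j ≤ v j) (hP : ∀ j, P j → u j < v j)
    {N : ℤ} (hNu : ∑ j, ⌊u j⌋ ≤ N)
    (hNv : N ≤ ∑ j, ⌊v j⌋ - Nat.card {j // P j ∧ ∃ k : ℤ, v j = k}) :
    ∃ τ, IsAdmissible P u v τ ∧ ∑ j, ⌊τ j⌋ = N := by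
  classical
  rw [sum_floor_sub_card_eq] at hNv
  have hab : ∀ j ∈ univ, ⌊u j⌋ ≤ if P j then ⌈v j⌉ - 1 else ⌊v j⌋ := by
    intro j _
    split_ifs with hPj
    · have := Int.floor_lt_ceil_of_lt (hP j hPj)
      omega
    · exact Int.floor_mono (huv j)
  obtain ⟨c, hc, hcN⟩ := exists_sum_eq_of_le_of_le univ hab hNu hNv
  have : ∀ j, ∃ t, (u j ≤ t ∧ t ≤ v j) ∧ (P j → ∀ k : ℤ, t ≠ k) ∧ ⌊t⌋ = c j := by
    intro j
    obtain ⟨hcu, hcv⟩ := hc j (mem_univ j)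
    by_cases hPj : P j
    · rw [if_pos hPj] at hcv
      obtain ⟨t, ht, htk, htc⟩ :=
        exists_mem_Icc_forall_ne_floor_eq (hP j hPj) hcu (by omega)
      exact ⟨t, ht, fun _ => htk, htc⟩
    · rw [if_neg hPj] at hcv
      obtain ⟨t, ht, htc⟩ := exists_mem_Icc_floor_eq (huv j) hcu hcv
      exact ⟨t, ht, fun h => absurd h hPj, htc⟩
  choose τ hτ hτP hτc using this
  exact ⟨τ, ⟨hτ, hτP⟩, (sum_congr rfl fun j _ => hτc j).trans hcN⟩

theorem setOf_exists_isAdmissible_mem_Icc_eq_Icc (huv : ∀ j, u j ≤ v j)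
    (hP : ∀ j, P j → u j < v j) {L : ℤ} (hL : 2 ≤ L) :
    {x : K | ∃ τ, IsAdmissible P u v τ ∧ x ∈ Set.Icc ((-(∑ j, ⌊τ j⌋) - L : ℤ) : K)
        ((-(∑ j, ⌊τ j⌋) + Nat.card {j // ¬P j ∧ ∃ k : ℤ, τ j = k} - 1 : ℤ) : K)} =
      Set.Icc ((Nat.card {j // P j ∧ ∃ k : ℤ, v j = k} - ∑ j, ⌊v j⌋ - L : ℤ) : K)
        ((Nat.card {j // ¬P j ∧ ∃ k : ℤ, u j = k} - 1 - ∑ j, ⌊u j⌋ : ℤ) : K) := by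
  ext x
  simp only [Set.mem_ofPred_eq, Set.mem_Icc, ← Int.le_floor, ← Int.ceil_le]
  have hx := Int.ceil_le_floor_add_one x
  constructor
  · rintro ⟨τ, hτ, hτx⟩
    have hv := hτ.sum_floor_le
    have hu := sum_floor_sub_card_mono (fun j => ¬P j) fun j => (hτ.1 j).1
    simp only at hu
    omega
  · rintro ⟨hvx, hxu⟩
    rcases le_or_gt (-(∑ j, ⌊u j⌋) - L) ⌊x⌋ with hA | hA
    · obtain ⟨τ, hτ, hτu, hτ_eq⟩ := exists_isAdmissible_floor_eq_floor huv hP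
      have hcard : Nat.card {j // ¬P j ∧ ∃ k : ℤ, τ j = k} =
          Nat.card {j // ¬P j ∧ ∃ k : ℤ, u j = k} :=
        Nat.card_congr <| Equiv.subtypeEquivRight fun j =>
          and_congr_right fun hPj => by rw [hτ_eq j hPj]
      refine ⟨τ, hτ, ?_⟩
      rw [sum_congr rfl fun j _ => hτu j, hcard]
      omega
    · -- For `N = -⌊x⌋ - L` the interval starts at `⌊x⌋` and, as `L ≥ 2`, reaches `⌊x⌋ + 1`.
      obtain ⟨τ, hτ, hτN⟩ := exists_isAdmissible_sum_floor_eq huv hP (N := -⌊x⌋ - L)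
        (by omega) (by omega)
      exact ⟨τ, hτ, by omega⟩

end Admissible

theorem stmt2_general (n r s : ℕ) (hnr : 3 ≤ n + r)
    (η ζ : Fin (r - 1) → ℚ)
    (hle : ∀ j, η j ≤ ζ j)
    (hlt : ∀ j : Fin (r - 1), (j : ℕ) < s → η j < ζ j) :
    {x : ℝ | ∃ τ : Fin (r - 1) → ℝ,
        (∀ j, (η j : ℝ) ≤ τ j ∧ τ j ≤ (ζ j : ℝ)) ∧
        (∀ j : Fin (r - 1), (j : ℕ) < s → ∀ k : ℤ, τ j ≠ (k : ℝ)) ∧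
        x ∈ Set.Icc
          (((-(∑ j, ⌊τ j⌋) - (n + r - 1) : ℤ) : ℝ))
          (((-(∑ j, ⌊τ j⌋)
              + (Nat.card {j : Fin (r - 1) // s ≤ (j : ℕ) ∧ ∃ k : ℤ, τ j = (k : ℝ)} : ℤ)
              - 1 : ℤ) : ℝ))}
    = Set.Icc
        ((((Nat.card {j : Fin (r - 1) // (j : ℕ) < s ∧ ∃ k : ℤ, ζ j = (k : ℚ)} : ℤ)
            - ∑ j, ⌊ζ j⌋ - (n + r - 1) : ℤ) : ℝ))
        ((((Nat.card {j : Fin (r - 1) // s ≤ (j : ℕ) ∧ ∃ k : ℤ, η j = (k : ℚ)} : ℤ)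
            - 1 - ∑ j, ⌊η j⌋ : ℤ) : ℝ)) := by
  have key := setOf_exists_isAdmissible_mem_Icc_eq_Icc (P := fun j : Fin (r - 1) => (j : ℕ) < s)
    (u := fun j => (η j : ℝ)) (v := fun j => (ζ j : ℝ)) (fun j => by exact_mod_cast hle j)
    (fun j hj => by exact_mod_cast hlt j hj) (L := n + r - 1) (by omega)
  have hcast : ∀ (q : ℚ) (k : ℤ), (q : ℝ) = k ↔ q = k := fun q k => by norm_cast
  simpa only [IsAdmissible, and_assoc, not_lt, Rat.floor_cast, hcast] using key

/-- The key step of Case 2 (`n + r ≥ 3`) of the proof of Theorem 2.2: the union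
of the intervals `[m₀(τ), m₁(τ)]`, where `m₀(τ) = b₀(τ) - (n + r - 1)` and
`m₁(τ) = b₀(τ) + s₀(τ) - 1`, over all `τ` in the box `∏ [η_j, ζ_j]` with
`i₀(τ) = 0` (i.e. `τ_j ∉ ℤ` for `1 ≤ j ≤ s`), equals the closed interval
`[c_min, c_max]` with `c_min = i₁ - ∑ ⌊ζ_j⌋ - (n + r - 1)` and
`c_max = s₁ - 1 - ∑ ⌊η_j⌋`, where `i₁ = |{j ≤ s : ζ_j ∈ ℤ}|` and
`s₁ = |{j > s : η_j ∈ ℤ}|`. -/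
theorem stmt2 (n r s : ℕ) (hr : 2 ≤ r) (hnr : 3 ≤ n + r) (hs : s ≤ r - 1)
    (η ζ : Fin (r - 1) → ℚ)
    (hle : ∀ j, η j ≤ ζ j)
    (hlt : ∀ j : Fin (r - 1), (j : ℕ) < s → η j < ζ j) :
    {x : ℝ | ∃ τ : Fin (r - 1) → ℝ,
        (∀ j, (η j : ℝ) ≤ τ j ∧ τ j ≤ (ζ j : ℝ)) ∧
        (∀ j : Fin (r - 1), (j : ℕ) < s → ∀ k : ℤ, τ j ≠ (k : ℝ)) ∧
        x ∈ Set.Icc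
          (((-(∑ j, ⌊τ j⌋) - (n + r - 1) : ℤ) : ℝ))
          (((-(∑ j, ⌊τ j⌋)
              + (Nat.card {j : Fin (r - 1) // s ≤ (j : ℕ) ∧ ∃ k : ℤ, τ j = (k : ℝ)} : ℤ)
              - 1 : ℤ) : ℝ))}
    = Set.Icc
        ((((Nat.card {j : Fin (r - 1) // (j : ℕ) < s ∧ ∃ k : ℤ, ζ j = (k : ℚ)} : ℤ)
            - ∑ j, ⌊ζ j⌋ - (n + r - 1) : ℤ) : ℝ))
        ((((Nat.card {j : Fin (r - 1) // s ≤ (j : ℕ) ∧ ∃ k : ℤ, η j = (k : ℚ)} : ℤ)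
            - 1 - ∑ j, ⌊η j⌋ : ℤ) : ℝ)) :=
  stmt2_general n r s hnr η ζ hle hlt
end

section
/- Let n ≥ 0, r ≥ 2 and 0 ≤ s ≤ r−1 be integers, and for 1 ≤ j ≤ r−1 let η_j ≤ ζ_j be rational numbers with η_j < ζ_j whenever 1 ≤ j ≤ s. For τ in the box T = ∏_{j=1}^{r−1}[η_j, ζ_j] set m₀(τ) = b₀(τ) + i₀(τ) − (n + r − 1) and m₁(τ) = b₀(τ) + s₀(τ) − 1. Then for each τ ∈ T with i₀(τ) > 0 there exists τ' ∈ T such that τ'_j = τ_j for all s+1 ≤ j ≤ r−1, i₀(τ') = 0, m₀(τ') ≤ m₀(τ) and m₁(τ') ≥ m₁(τ); in particular [m₀(τ), m₁(τ)] ⊆ [m₀(τ'), m₁(τ')]. -/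
/-!
An integer coordinate `τ_j = k` with `j ≤ s` can be moved inside `[η_j, ζ_j]`, which is
nondegenerate, to a point of `(k - 1, k + 1) \ {k}`: upwards if `k < ζ_j`, downwards otherwise.
This removes it from `i₀` at the cost of lowering `⌊τ_j⌋` by at most one, so `b₀` rises by at
most `i₀(τ)` while `i₀` drops by `i₀(τ)`; and since no floor increases, `b₀` does not drop,
while `s₀` is untouched.
-/

open Set

lemma ne_intCast_of_mem_Ioo_sub_one_add_one {y : ℝ} {k : ℤ}
    (hy : y ∈ Ioo ((k : ℝ) - 1) (k + 1)) (hyk : y ≠ k) (m : ℤ) : y ≠ m := by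
  rintro rfl
  have hlo : k - 1 < m := by exact_mod_cast hy.1
  have hhi : m < k + 1 := by exact_mod_cast hy.2
  exact hyk (by rw [show m = k by omega])

lemma exists_mem_Icc_ne_intCast_floor_near {a b : ℝ} (hab : a < b) {k : ℤ}
    (hk : (k : ℝ) ∈ Icc a b) :
    ∃ y ∈ Icc a b, (∀ m : ℤ, y ≠ m) ∧ k - 1 ≤ ⌊y⌋ ∧ ⌊y⌋ ≤ k := by
  obtain ⟨y, hyab, hyI, hyk⟩ : ∃ y ∈ Icc a b, y ∈ Ioo ((k : ℝ) - 1) (k + 1) ∧ y ≠ k := by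
    by_cases hkb : (k : ℝ) < b
    · have hky : (k : ℝ) < min b (k + 1 / 2) := lt_min hkb (by linarith)
      have hyk : min b (k + 1 / 2) ≤ (k : ℝ) + 1 / 2 := min_le_right _ _
      exact ⟨_, ⟨hk.1.trans hky.le, min_le_left _ _⟩, ⟨by linarith, by linarith⟩, hky.ne'⟩
    · have hka : a < (k : ℝ) := hab.trans_le (not_lt.mp hkb)
      have hyk : max a (k - 1 / 2) < (k : ℝ) := max_lt hka (by linarith)
      have hky : (k : ℝ) - 1 / 2 ≤ max a (k - 1 / 2) := le_max_right _ _
      exact ⟨_, ⟨le_max_left _ _, hyk.le.trans hk.2⟩, ⟨by linarith, by linarith⟩, hyk.ne⟩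
  refine ⟨y, hyab, ne_intCast_of_mem_Ioo_sub_one_add_one hyI hyk, ?_, ?_⟩
  · exact Int.le_floor.mpr (by push_cast; exact hyI.1.le)
  · exact Int.floor_le_iff.mpr hyI.2

lemma exists_perturb_off_intCast {ι : Type*} (p : ι → Prop) (η ζ τ : ι → ℝ)
    (hlt : ∀ j, p j → η j < ζ j) (hτ : ∀ j, τ j ∈ Icc (η j) (ζ j)) :
    ∃ τ' : ι → ℝ, (∀ j, τ' j ∈ Icc (η j) (ζ j)) ∧
      (∀ j, ¬ (p j ∧ ∃ k : ℤ, τ j = k) → τ' j = τ j) ∧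
      (∀ j, p j → ∀ m : ℤ, τ' j ≠ m) ∧ (∀ j, ⌊τ' j⌋ ≤ ⌊τ j⌋) ∧ ∀ j, ⌊τ j⌋ ≤ ⌊τ' j⌋ + 1 := by
  suffices ∀ j, ∃ y ∈ Icc (η j) (ζ j), (¬ (p j ∧ ∃ k : ℤ, τ j = k) → y = τ j) ∧
      (p j → ∀ m : ℤ, y ≠ m) ∧ ⌊y⌋ ≤ ⌊τ j⌋ ∧ ⌊τ j⌋ ≤ ⌊y⌋ + 1 by
    choose τ' hbox hfix hne hle hge using this
    exact ⟨τ', hbox, hfix, hne, hle, hge⟩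
  intro j
  by_cases hj : p j ∧ ∃ k : ℤ, τ j = k
  · obtain ⟨hpj, k, hk⟩ := hj
    obtain ⟨y, hy, hyne, hlo, hhi⟩ :=
      exists_mem_Icc_ne_intCast_floor_near (hlt j hpj) (hk ▸ hτ j)
    refine ⟨y, hy, fun h => (h ⟨hpj, k, hk⟩).elim, fun _ => hyne, ?_, ?_⟩ <;>
      rw [hk, Int.floor_intCast] <;> omega
  · exact ⟨τ j, hτ j, fun _ => rfl, fun hpj m hm => hj ⟨hpj, m, hm⟩, le_rfl,
      Int.le_add_one le_rfl⟩

lemma sum_le_sum_add_card {ι : Type*} [Fintype ι] (P : ι → Prop) {f g : ι → ℤ}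
    (hle : ∀ j, f j ≤ g j + 1) (hP : ∀ j, ¬ P j → f j ≤ g j) :
    ∑ j, f j ≤ ∑ j, g j + Nat.card {j // P j} := by
  classical
  calc ∑ j, f j ≤ ∑ j, (g j + if P j then 1 else 0) :=
        Finset.sum_le_sum fun j _ => by split_ifs with h <;> simp [hle j, hP j, h]
    _ = ∑ j, g j + Nat.card {j // P j} := by
      rw [Finset.sum_add_distrib, Finset.sum_boole, Nat.card_eq_fintype_card,
        Fintype.card_subtype]

theorem stmt3_general (n r s : ℕ)
    (η ζ : Fin (r - 1) → ℚ)
    (hlt : ∀ j : Fin (r - 1), (j : ℕ) < s → η j < ζ j)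
    (τ : Fin (r - 1) → ℝ)
    (hτ : ∀ j, (η j : ℝ) ≤ τ j ∧ τ j ≤ (ζ j : ℝ)) :
    ∃ τ' : Fin (r - 1) → ℝ,
      (∀ j, (η j : ℝ) ≤ τ' j ∧ τ' j ≤ (ζ j : ℝ)) ∧
      (∀ j : Fin (r - 1), s ≤ (j : ℕ) → τ' j = τ j) ∧
      (∀ j : Fin (r - 1), (j : ℕ) < s → ∀ k : ℤ, τ' j ≠ (k : ℝ)) ∧
      (-(∑ j, ⌊τ' j⌋)
          + (Nat.card {j : Fin (r - 1) // (j : ℕ) < s ∧ ∃ k : ℤ, τ' j = (k : ℝ)} : ℤ)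
          - (n + r - 1)
        ≤ -(∑ j, ⌊τ j⌋)
          + (Nat.card {j : Fin (r - 1) // (j : ℕ) < s ∧ ∃ k : ℤ, τ j = (k : ℝ)} : ℤ)
          - (n + r - 1)) ∧
      (-(∑ j, ⌊τ j⌋)
          + (Nat.card {j : Fin (r - 1) // s ≤ (j : ℕ) ∧ ∃ k : ℤ, τ j = (k : ℝ)} : ℤ) - 1
        ≤ -(∑ j, ⌊τ' j⌋)
          + (Nat.card {j : Fin (r - 1) // s ≤ (j : ℕ) ∧ ∃ k : ℤ, τ' j = (k : ℝ)} : ℤ) - 1) := by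
  obtain ⟨τ', hbox, hfix, hne, hfloor_le, hfloor_ge⟩ :=
    exists_perturb_off_intCast (fun j : Fin (r - 1) => (j : ℕ) < s) (fun j => η j) (fun j => ζ j)
      τ (fun j hj => by exact_mod_cast hlt j hj) hτ
  have hagree : ∀ j : Fin (r - 1), s ≤ (j : ℕ) → τ' j = τ j :=
    fun j hj => hfix j fun h => (not_lt.mpr hj) h.1
  have hi₀ : Nat.card {j : Fin (r - 1) // (j : ℕ) < s ∧ ∃ k : ℤ, τ' j = (k : ℝ)} = 0 :=
    Nat.card_eq_zero.mpr (.inl ⟨fun ⟨j, hjs, k, hk⟩ => hne j hjs k hk⟩)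
  have hs₀ : Nat.card {j : Fin (r - 1) // s ≤ (j : ℕ) ∧ ∃ k : ℤ, τ' j = (k : ℝ)} =
      Nat.card {j : Fin (r - 1) // s ≤ (j : ℕ) ∧ ∃ k : ℤ, τ j = (k : ℝ)} :=
    Nat.card_congr <| Equiv.subtypeEquivRight fun j =>
      and_congr_right fun hjs => by rw [hagree j hjs]
  have hb₀_le := sum_le_sum_add_card _ hfloor_ge fun j h => (congrArg Int.floor (hfix j h)).ge
  have hb₀_ge : ∑ j, ⌊τ' j⌋ ≤ ∑ j, ⌊τ j⌋ := Finset.sum_le_sum fun j _ => hfloor_le j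
  refine ⟨τ', hbox, hagree, hne, ?_, ?_⟩
  · rw [hi₀]
    push_cast
    linarith
  · rw [hs₀]
    linarith

/-- The reduction step in the proof of Theorem 2.2: for every `τ` in the box
`∏ [η_j, ζ_j]` with `i₀(τ) > 0` there is `τ'` in the box agreeing with `τ`
in the coordinates `s+1 ≤ j ≤ r-1`, with `i₀(τ') = 0` (i.e. `τ'_j ∉ ℤ` for
`1 ≤ j ≤ s`), `m₀(τ') ≤ m₀(τ)` and `m₁(τ') ≥ m₁(τ)`, where
`m₀(τ) = b₀(τ) + i₀(τ) - (n + r - 1)`, `m₁(τ) = b₀(τ) + s₀(τ) - 1`,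
`b₀(τ) = -(⌊τ₁⌋ + ⋯ + ⌊τ_{r-1}⌋)`, `i₀(τ) = |{j ≤ s : τ_j ∈ ℤ}|` and
`s₀(τ) = |{j > s : τ_j ∈ ℤ}|`. -/
theorem stmt3 (n r s : ℕ) (hr : 2 ≤ r) (hs : s ≤ r - 1)
    (η ζ : Fin (r - 1) → ℚ)
    (hle : ∀ j, η j ≤ ζ j)
    (hlt : ∀ j : Fin (r - 1), (j : ℕ) < s → η j < ζ j)
    (τ : Fin (r - 1) → ℝ)
    (hτ : ∀ j, (η j : ℝ) ≤ τ j ∧ τ j ≤ (ζ j : ℝ))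
    (hi : 0 < Nat.card {j : Fin (r - 1) // (j : ℕ) < s ∧ ∃ k : ℤ, τ j = (k : ℝ)}) :
    ∃ τ' : Fin (r - 1) → ℝ,
      (∀ j, (η j : ℝ) ≤ τ' j ∧ τ' j ≤ (ζ j : ℝ)) ∧
      (∀ j : Fin (r - 1), s ≤ (j : ℕ) → τ' j = τ j) ∧
      (∀ j : Fin (r - 1), (j : ℕ) < s → ∀ k : ℤ, τ' j ≠ (k : ℝ)) ∧
      (-(∑ j, ⌊τ' j⌋)
          + (Nat.card {j : Fin (r - 1) // (j : ℕ) < s ∧ ∃ k : ℤ, τ' j = (k : ℝ)} : ℤ)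
          - (n + r - 1)
        ≤ -(∑ j, ⌊τ j⌋)
          + (Nat.card {j : Fin (r - 1) // (j : ℕ) < s ∧ ∃ k : ℤ, τ j = (k : ℝ)} : ℤ)
          - (n + r - 1)) ∧
      (-(∑ j, ⌊τ j⌋)
          + (Nat.card {j : Fin (r - 1) // s ≤ (j : ℕ) ∧ ∃ k : ℤ, τ j = (k : ℝ)} : ℤ) - 1
        ≤ -(∑ j, ⌊τ' j⌋)
          + (Nat.card {j : Fin (r - 1) // s ≤ (j : ℕ) ∧ ∃ k : ℤ, τ' j = (k : ℝ)} : ℤ) - 1) :=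
  stmt3_general n r s η ζ hlt τ hτ
end

section
/- Let N ≥ 2 be an integer and let a ≤ b be real numbers. For x ∈ ℝ let χ(x) = 1 if x ∈ ℤ and χ(x) = 0 otherwise. Then the union over x ∈ [a, b] of the closed real intervals [−⌊x⌋ − N, −⌊x⌋ + χ(x) − 1] equals the closed interval [−⌊b⌋ − N, −⌊a⌋ + χ(a) − 1]. -/
/-!
Since `⌈x⌉ = ⌊x⌋ + 1 - χ(x)`, the intervals are `[-⌊x⌋ - N, -⌈x⌉]`, and both endpoints
are antitone in `x`; this gives one inclusion.
For the other, a point `y ≥ -⌊a⌋ - N` is covered by the interval at `x = a`; a point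
`y < -⌊a⌋ - N` is covered by the interval at the integer `x = ⌈-y - N⌉`, which lies in
`[a, b]` and, as `N ≥ 1`, has an interval of length `N` containing `y`.
-/

open Classical Set

section LinearOrderedField

variable {R : Type*} [Field R] [LinearOrder R] [IsStrictOrderedRing R] [FloorRing R]

theorem neg_floor_add_ite_sub_one_eq_neg_ceil (x : R) :
    -(⌊x⌋ : R) + (if ∃ k : ℤ, x = (k : R) then (1 : R) else 0) - 1 = -(⌈x⌉ : R) := by
  by_cases hx : ∃ k : ℤ, x = (k : R)
  · obtain ⟨k, rfl⟩ := hx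
    simp
  · have hceil : ⌈x⌉ = ⌊x⌋ + 1 :=
      (Int.ceil_eq_floor_add_one_iff_notMem x).mpr fun ⟨k, hk⟩ => hx ⟨k, hk.symm⟩
    rw [if_neg hx, hceil]
    push_cast
    ring

theorem exists_int_mem_Icc_of_mem_Ico_neg_floor_sub {N a b y : R} (hN : 1 ≤ N)
    (hy : y ∈ Ico (-(⌊b⌋ : R) - N) (-(⌊a⌋ : R) - N)) :
    ∃ m : ℤ, (m : R) ∈ Icc a b ∧ y ∈ Icc (-(m : R) - N) (-(m : R)) := by
  obtain ⟨hby, hya⟩ := hy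
  set m := ⌈-y - N⌉
  have hm_ge : -y - N ≤ m := Int.le_ceil _
  have hm_lt : (m : R) < -y - N + 1 := Int.ceil_lt_add_one _
  have ha : a ≤ m := by
    have : ⌊a⌋ < m := Int.lt_ceil.mpr (by linarith)
    exact (Int.lt_floor_add_one a).le.trans (by exact_mod_cast this)
  have hb : (m : R) ≤ b :=
    (Int.cast_le.mpr (Int.ceil_le.mpr (by linarith))).trans (Int.floor_le b)
  exact ⟨m, ⟨ha, hb⟩, by linarith, by linarith⟩

theorem biUnion_Icc_neg_floor_sub_neg_ceil {N a b : R} (hN : 1 ≤ N) (hab : a ≤ b) :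
    ⋃ x ∈ Icc a b, Icc (-(⌊x⌋ : R) - N) (-(⌈x⌉ : R)) = Icc (-(⌊b⌋ : R) - N) (-(⌈a⌉ : R)) := by
  apply Subset.antisymm
  · refine iUnion₂_subset fun x ⟨hax, hxb⟩ => Icc_subset_Icc ?_ ?_
    · have : (⌊x⌋ : R) ≤ ⌊b⌋ := by exact_mod_cast Int.floor_le_floor hxb
      linarith
    · have : (⌈a⌉ : R) ≤ ⌈x⌉ := by exact_mod_cast Int.ceil_le_ceil hax
      linarith
  · rintro y ⟨hby, hya⟩
    rw [mem_iUnion₂]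
    rcases le_or_gt (-(⌊a⌋ : R) - N) y with hay | hay
    · exact ⟨a, ⟨le_rfl, hab⟩, hay, hya⟩
    · obtain ⟨m, hm, hym⟩ := exists_int_mem_Icc_of_mem_Ico_neg_floor_sub hN ⟨hby, hay⟩
      exact ⟨m, hm, by rwa [Int.floor_intCast, Int.ceil_intCast]⟩

end LinearOrderedField

/-- The one-variable connectivity claim used in Case 2 of the proof of
Theorem 2.2 (index not in `J`): for an integer `N ≥ 2` and reals `a ≤ b`,
the union over `x ∈ [a, b]` of the intervals `[-⌊x⌋ - N, -⌊x⌋ + χ(x) - 1]`,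
where `χ(x) = 1` if `x ∈ ℤ` and `χ(x) = 0` otherwise, equals the closed
interval `[-⌊b⌋ - N, -⌊a⌋ + χ(a) - 1]`. -/
theorem stmt4 (N : ℤ) (hN : 2 ≤ N) (a b : ℝ) (hab : a ≤ b) :
    {y : ℝ | ∃ x ∈ Set.Icc a b,
        y ∈ Set.Icc (-(⌊x⌋ : ℝ) - N)
          (-(⌊x⌋ : ℝ) + (if ∃ k : ℤ, x = (k : ℝ) then (1 : ℝ) else 0) - 1)}
    = Set.Icc (-(⌊b⌋ : ℝ) - N)
        (-(⌊a⌋ : ℝ) + (if ∃ k : ℤ, a = (k : ℝ) then (1 : ℝ) else 0) - 1) := by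
  have hN1 : (1 : ℝ) ≤ N := by exact_mod_cast (by omega : 1 ≤ N)
  simp only [neg_floor_add_ite_sub_one_eq_neg_ceil]
  rw [← biUnion_Icc_neg_floor_sub_neg_ceil hN1 hab]
  ext y
  simp only [mem_ofPred_eq, mem_iUnion, exists_prop]
end

section
/- Let N ≥ 2 be an integer and let a < b be real numbers. For x ∈ ℝ let χ(x) = 1 if x ∈ ℤ and χ(x) = 0 otherwise. Then the union over x ∈ [a, b] with x ∉ ℤ of the closed real intervals [−⌊x⌋ − N, −⌊x⌋ − 1] equals the closed interval [χ(b) − ⌊b⌋ − N, −⌊a⌋ − 1]. -/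
/-!
The floors of the non-integers in `[a, b]` are exactly the integers `m` with
`⌊a⌋ ≤ m ≤ ⌈b⌉ - 1`, and `⌈b⌉ - 1 = ⌊b⌋ - χ(b)`. The intervals `[-m - N, -m - 1]` have length
`N - 1 ≥ 1`, so consecutive ones overlap, and their union over this range of `m` is
`[-(⌈b⌉ - 1) - N, -⌊a⌋ - 1]`.
-/

open Classical Set

section FloorRing

variable {R : Type*} [CommRing R] [LinearOrder R] [IsStrictOrderedRing R] [FloorRing R]

lemma Int.floor_mem_Icc_floor_ceil_sub_one {a b x : R} (hx : x ∈ Icc a b)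
    (hx_int : x ∉ Set.range Int.cast) : ⌊x⌋ ∈ Icc ⌊a⌋ (⌈b⌉ - 1) := by
  have hlt : (⌊x⌋ : R) < b := (Int.floor_lt_self_iff.mpr hx_int).trans_le hx.2
  exact ⟨Int.floor_le_floor hx.1, Int.le_sub_one_iff.mpr (Int.lt_ceil.mpr hlt)⟩

lemma Int.cast_ceil_sub_one (b : R) :
    ((⌈b⌉ - 1 : ℤ) : R) = ⌊b⌋ - if ∃ k : ℤ, b = k then (1 : R) else 0 := by
  split_ifs with hb
  · obtain ⟨k, rfl⟩ := hb
    simp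
  · rw [(Int.ceil_eq_floor_add_one_iff_notMem b).mpr fun ⟨k, hk⟩ => hb ⟨k, hk.symm⟩]
    push_cast
    ring

lemma biUnion_Icc_sub_intCast {u v : R} (huv : u + 1 ≤ v) {p q : ℤ} (hpq : p ≤ q) :
    ⋃ m ∈ Icc p q, Icc (u - m) (v - m) = Icc (u - q) (v - p) := by
  ext y
  simp only [mem_iUnion, mem_Icc, exists_prop]
  constructor
  · rintro ⟨m, ⟨hpm, hmq⟩, hym, hmy⟩
    have hpm' : (p : R) ≤ m := by exact_mod_cast hpm
    have hmq' : (m : R) ≤ q := by exact_mod_cast hmq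
    constructor <;> linarith
  · rintro ⟨hqy, hyp⟩
    have hfloor_le : (⌊v - y⌋ : R) ≤ v - y := Int.floor_le _
    have hlt_floor : v - y < ⌊v - y⌋ + 1 := Int.lt_floor_add_one _
    have hp : p ≤ ⌊v - y⌋ := Int.le_floor.mpr (by linarith)
    refine ⟨min q ⌊v - y⌋, ⟨le_min hpq hp, min_le_left _ _⟩, ?_, ?_⟩
    · rcases min_choice q ⌊v - y⌋ with h | h <;> rw [h] <;> linarith
    · have : ((min q ⌊v - y⌋ : ℤ) : R) ≤ ⌊v - y⌋ := by exact_mod_cast min_le_right _ _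
      linarith

end FloorRing

lemma Int.exists_floor_eq_of_mem_Icc_floor_ceil_sub_one {R : Type*} [Field R] [LinearOrder R]
    [IsStrictOrderedRing R] [FloorRing R] {a b : R} (hab : a < b) {m : ℤ}
    (hm : m ∈ Icc ⌊a⌋ (⌈b⌉ - 1)) :
    ∃ x ∈ Icc a b, x ∉ Set.range Int.cast ∧ ⌊x⌋ = m := by
  have ham : a < m + 1 := by exact_mod_cast Int.floor_lt.mp (Int.lt_add_one_iff.mpr hm.1)
  have hmb : (m : R) < b := Int.lt_ceil.mp (Int.le_sub_one_iff.mp hm.2)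
  obtain ⟨x, hlox, hxhi⟩ :=
    exists_between (max_lt (lt_min hab ham) (lt_min hmb (lt_add_one _)) : max a m < min b (m + 1))
  have hmx : (m : R) < x := (le_max_right _ _).trans_lt hlox
  have hxm : x < m + 1 := hxhi.trans_le (min_le_right _ _)
  refine ⟨x, ⟨(le_max_left _ _).trans hlox.le, hxhi.le.trans (min_le_left _ _)⟩, ?_,
    Int.floor_eq_iff.mpr ⟨hmx.le, hxm⟩⟩
  rintro ⟨k, rfl⟩
  have h1 : m < k := by exact_mod_cast hmx
  have h2 : k < m + 1 := by exact_mod_cast hxm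
  omega

/-- The one-variable connectivity claim used in Case 2 of the proof of
Theorem 2.2 (index in `J`, so integer values excluded): for an integer
`N ≥ 2` and reals `a < b`, the union over non-integer `x ∈ [a, b]` of the
intervals `[-⌊x⌋ - N, -⌊x⌋ - 1]` equals the closed interval
`[χ(b) - ⌊b⌋ - N, -⌊a⌋ - 1]`, where `χ(x) = 1` if `x ∈ ℤ` and `χ(x) = 0`
otherwise. -/
theorem stmt5 (N : ℤ) (hN : 2 ≤ N) (a b : ℝ) (hab : a < b) :
    {y : ℝ | ∃ x ∈ Set.Icc a b, (∀ k : ℤ, x ≠ (k : ℝ)) ∧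
        y ∈ Set.Icc (-(⌊x⌋ : ℝ) - N) (-(⌊x⌋ : ℝ) - 1)}
    = Set.Icc ((if ∃ k : ℤ, b = (k : ℝ) then (1 : ℝ) else 0) - (⌊b⌋ : ℝ) - N)
        (-(⌊a⌋ : ℝ) - 1) := by
  have hlen : (-N : ℝ) + 1 ≤ -1 := by
    have : (2 : ℝ) ≤ N := by exact_mod_cast hN
    linarith
  have hnot_int : ∀ x : ℝ, (∀ k : ℤ, x ≠ k) ↔ x ∉ Set.range Int.cast := by
    simp [eq_comm]
  have hrhs : Icc ((if ∃ k : ℤ, b = (k : ℝ) then (1 : ℝ) else 0) - (⌊b⌋ : ℝ) - N)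
      (-(⌊a⌋ : ℝ) - 1) = Icc (-N - ((⌈b⌉ - 1 : ℤ) : ℝ)) (-1 - ⌊a⌋) := by
    rw [Int.cast_ceil_sub_one]
    congr 1 <;> ring
  rw [hrhs, ← biUnion_Icc_sub_intCast hlen
    (Int.le_sub_one_iff.mpr (Int.floor_lt_ceil_of_lt hab))]
  ext y
  simp only [mem_ofPred_eq, mem_iUnion, exists_prop, hnot_int, neg_sub_comm _ (N : ℝ),
    neg_sub_comm _ (1 : ℝ)]
  constructor
  · rintro ⟨x, hx, hx_int, hy⟩
    exact ⟨⌊x⌋, Int.floor_mem_Icc_floor_ceil_sub_one hx hx_int, hy⟩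
  · rintro ⟨m, hm, hy⟩
    obtain ⟨x, hx, hx_int, rfl⟩ := Int.exists_floor_eq_of_mem_Icc_floor_ceil_sub_one hab hm
    exact ⟨x, hx, hx_int, hy⟩
end

section
/- Let G be a subgroup of SL(2,ℝ) such that every element A ∈ G satisfies either A ∈ {I, −I} or |tr A| < 2 (i.e. every non-central element of G is elliptic). Then there is a point z of the upper half-plane ℍ that is fixed by every element of G under the Möbius action A·z = (az + b)/(cz + d) for A = [[a, b], [c, d]]. -/
/-!
An elliptic element `r ∈ G` has a fixed point `z ∈ ℍ`. Conjugating by some `m` with `m • I = z`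
we may take `z = I`, so that `r = [[a, b], [-b, a]]` is a rotation with `b ≠ 0`. For any `g`,
the commutator `g r g⁻¹ r⁻¹` then has trace `2 + b² ((g₀₀ - g₁₁)² + (g₀₁ + g₁₀)²)`, while every
element of `G` has trace at most `2`; so `g₀₀ = g₁₁`, `g₀₁ = -g₁₀`, i.e. `g` also fixes `I`.
If `G` has no elliptic element, then `G ⊆ {±1}` fixes every point.
-/

open Matrix UpperHalfPlane
open scoped MatrixGroups

namespace Matrix.SpecialLinearGroup

lemma trace_coe_inv_mul_mul {n R : Type*} [Fintype n] [DecidableEq n] [CommRing R]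
    (g h : SpecialLinearGroup n R) :
    trace (↑(g⁻¹ * h * g) : Matrix n n R) = trace (h : Matrix n n R) := by
  rw [coe_mul, coe_mul, Matrix.mul_assoc, trace_mul_comm, Matrix.mul_assoc, ← coe_mul,
    mul_inv_cancel, coe_one, Matrix.mul_one]

variable {R : Type*} [CommRing R]

lemma SL2_det_expl (g : SL(2, R)) : g 0 0 * g 1 1 - g 0 1 * g 1 0 = 1 := by
  rw [← det_fin_two]
  exact g.det_coe

lemma SL2_coe_inv_expl (g : SL(2, R)) :
    ((g⁻¹ : SL(2, R)) : Matrix (Fin 2) (Fin 2) R) = !![g 1 1, -g 0 1; -g 1 0, g 0 0] := by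
  rw [SL2_inv_expl]
  ext i j
  fin_cases i <;> fin_cases j <;> rfl

lemma SL2_trace_commutator (g r : SL(2, R)) (hr : r 0 0 = r 1 1 ∧ r 0 1 = -r 1 0) :
    trace (↑(g * r * g⁻¹ * r⁻¹) : Matrix (Fin 2) (Fin 2) R) =
      2 + r 1 0 ^ 2 * ((g 0 0 - g 1 1) ^ 2 + (g 0 1 + g 1 0) ^ 2) := by
  obtain ⟨h00, h01⟩ := hr
  have hg := SL2_det_expl g
  have hr := SL2_det_expl r
  simp only [coe_mul, SL2_coe_inv_expl, trace_fin_two, mul_apply, Fin.sum_univ_two, of_apply,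
    cons_val', cons_val_zero, cons_val_one, empty_val', cons_val_fin_one]
  rw [h00, h01] at hr ⊢
  linear_combination (2 : R) * hg + (2 * g 0 0 * g 1 1 - 2 * g 0 1 * g 1 0) * hr

end Matrix.SpecialLinearGroup

namespace UpperHalfPlane

open Matrix.SpecialLinearGroup

lemma sl_smul_eq_mapGL_smul (g : SL(2, ℝ)) (z : ℍ) : g • z = mapGL ℝ g • z := rfl

lemma sl_smul_eq_self_iff (g : SL(2, ℝ)) (z : ℍ) :
    g • z = z ↔ ((g 0 0 : ℂ) * z + g 0 1) / (g 1 0 * z + g 1 1) = z := by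
  rw [UpperHalfPlane.ext_iff, coe_specialLinearGroup_apply]
  simp

lemma sl_smul_I_eq_I_iff (g : SL(2, ℝ)) : g • I = I ↔ g 0 0 = g 1 1 ∧ g 0 1 = -g 1 0 := by
  rw [sl_smul_eq_mapGL_smul, gl_smul_I_eq_I_iff_of_pos (by simp)]
  simp

lemma exists_sl_smul_eq_self_of_abs_trace_lt_two (g : SL(2, ℝ))
    (h : |trace (g : Matrix (Fin 2) (Fin 2) ℝ)| < 2) : ∃ z : ℍ, g • z = z := by
  have hell : (mapGL ℝ g).IsElliptic := by
    have := sq_lt_sq' (abs_lt.1 h).1 (abs_lt.1 h).2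
    simp [GeneralLinearGroup.IsElliptic, IsElliptic, discr_fin_two]
    nlinarith
  exact ⟨fixedPt _ hell, (gl_smul_eq_self_iff_eq_fixedPt (by simp) hell).2 rfl⟩

lemma sl_smul_I_eq_I_of_trace_commutator_le_two {g r : SL(2, ℝ)} (hr : r • I = I)
    (hr_tr : |trace (r : Matrix (Fin 2) (Fin 2) ℝ)| < 2)
    (hgr : trace (↑(g * r * g⁻¹ * r⁻¹) : Matrix (Fin 2) (Fin 2) ℝ) ≤ 2) : g • I = I := by
  rw [sl_smul_I_eq_I_iff] at hr ⊢
  have hc : r 1 0 ≠ 0 := by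
    intro hc
    have hdet := SL2_det_expl r
    rw [trace_fin_two, ← hr.1] at hr_tr
    rw [hr.2, hc, ← hr.1] at hdet
    obtain ⟨h1, h2⟩ := abs_lt.1 hr_tr
    nlinarith
  rw [SL2_trace_commutator g r hr] at hgr
  have hsum : (g 0 0 - g 1 1) ^ 2 + (g 0 1 + g 1 0) ^ 2 ≤ 0 :=
    nonpos_of_mul_nonpos_right (a := r 1 0 ^ 2) (by linarith) (by positivity)
  constructor <;> nlinarith [sq_nonneg (g 0 0 - g 1 1), sq_nonneg (g 0 1 + g 1 0)]

lemma sl_smul_eq_self_of_trace_commutator_le_two {g r : SL(2, ℝ)} {z : ℍ} (hr : r • z = z)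
    (hr_tr : |trace (r : Matrix (Fin 2) (Fin 2) ℝ)| < 2)
    (hgr : trace (↑(g * r * g⁻¹ * r⁻¹) : Matrix (Fin 2) (Fin 2) ℝ) ≤ 2) : g • z = z := by
  obtain ⟨m, rfl⟩ := MulAction.exists_smul_eq SL(2, ℝ) I z
  have hconj : (m⁻¹ * g * m) • I = I := by
    refine sl_smul_I_eq_I_of_trace_commutator_le_two (r := m⁻¹ * r * m) ?_ ?_ ?_
    · rw [mul_smul, mul_smul, hr, inv_smul_smul]
    · rwa [trace_coe_inv_mul_mul]
    · have : m⁻¹ * g * m * (m⁻¹ * r * m) * (m⁻¹ * g * m)⁻¹ * (m⁻¹ * r * m)⁻¹ =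
          m⁻¹ * (g * r * g⁻¹ * r⁻¹) * m := by group
      rwa [this, trace_coe_inv_mul_mul]
  rwa [mul_smul, mul_smul, inv_smul_eq_iff] at hconj

end UpperHalfPlane

/-- A subgroup of `SL(2, ℝ)` all of whose non-central elements are elliptic
(`|tr| < 2`) has a common fixed point in the upper half-plane under the
Möbius action `A · z = (az + b) / (cz + d)`. -/
theorem stmt14 (G : Subgroup (Matrix.SpecialLinearGroup (Fin 2) ℝ))
    (hG : ∀ A ∈ G, (A : Matrix (Fin 2) (Fin 2) ℝ) = 1 ∨
      (A : Matrix (Fin 2) (Fin 2) ℝ) = -1 ∨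
      |Matrix.trace (A : Matrix (Fin 2) (Fin 2) ℝ)| < 2) :
    ∃ z : ℂ, 0 < z.im ∧ ∀ A ∈ G,
      (((A : Matrix (Fin 2) (Fin 2) ℝ) 0 0 : ℂ) * z
          + ((A : Matrix (Fin 2) (Fin 2) ℝ) 0 1 : ℂ)) /
        (((A : Matrix (Fin 2) (Fin 2) ℝ) 1 0 : ℂ) * z
          + ((A : Matrix (Fin 2) (Fin 2) ℝ) 1 1 : ℂ)) = z := by
  have trace_le_two : ∀ A ∈ G, trace (A : Matrix (Fin 2) (Fin 2) ℝ) ≤ 2 := by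
    intro A hA
    rcases hG A hA with h | h | h
    · simp [h]
    · norm_num [h]
    · exact (abs_lt.1 h).2.le
  obtain ⟨z, hz⟩ : ∃ z : ℍ, ∀ A ∈ G, A • z = z := by
    by_cases hell : ∃ r ∈ G, |trace (r : Matrix (Fin 2) (Fin 2) ℝ)| < 2
    · obtain ⟨r, hrG, hr⟩ := hell
      obtain ⟨z, hz⟩ := exists_sl_smul_eq_self_of_abs_trace_lt_two r hr
      refine ⟨z, fun g hg ↦ sl_smul_eq_self_of_trace_commutator_le_two hz hr (trace_le_two _ ?_)⟩
      exact mul_mem (mul_mem (mul_mem hg hrG) (inv_mem hg)) (inv_mem hrG)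
    · refine ⟨I, fun A hA ↦ ?_⟩
      rcases hG A hA with h | h | h
      · simp [sl_smul_I_eq_I_iff, h]
      · simp [sl_smul_I_eq_I_iff, h]
      · exact (hell ⟨A, hA, h⟩).elim
  exact ⟨z, z.im_pos, fun A hA ↦ (sl_smul_eq_self_iff A z).1 (hz A hA)⟩
end
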